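/- arXiv:math/0508137 — 2 statements merged into one kernel-verified Lean document; each statement's English description precedes it below -/
import Mathlib

section
/- If R is an n×m matrix and S is an m×n matrix over a commutative ring, then det(I_n - t·RS) = det(I_m - t·SR) as polynomials in t. Hence elementary strong shift equivalent matrices have the same zeta function det(I - tA)^{-1}. -/
open Polynomial

/-- Elementary strong shift equivalence of finite square non-negative integer matrices. -/
def ElemSSE {n m : ℕ} (A : Matrix (Fin n) (Fin n) ℕ) (B : Matrix (Fin m) (Fin m) ℕ) : Prop :=
  ∃ (R : Matrix (Fin n) (Fin m) ℕ) (S : Matrix (Fin m) (Fin n) ℕ), A = R * S ∧ B = S * R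

/-- det(Iₙ - t·RS) = det(Iₘ - t·SR); hence elementary strong shift equivalent
matrices have the same zeta function det(I - tA)⁻¹. -/
theorem det_one_sub_smul_mul_comm (α : Type*) [CommRing α] :
    (∀ (n m : ℕ) (R : Matrix (Fin n) (Fin m) α) (S : Matrix (Fin m) (Fin n) α),
      ((1 : Matrix (Fin n) (Fin n) α[X]) - (X : α[X]) • (R * S).map C).det =
      ((1 : Matrix (Fin m) (Fin m) α[X]) - (X : α[X]) • (S * R).map C).det) ∧
    (∀ (n m : ℕ) (A : Matrix (Fin n) (Fin n) ℕ) (B : Matrix (Fin m) (Fin m) ℕ),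
      ElemSSE A B →
      ((1 : Matrix (Fin n) (Fin n) ℤ[X]) - (X : ℤ[X]) • A.map (fun a => (a : ℤ[X]))).det =
      ((1 : Matrix (Fin m) (Fin m) ℤ[X]) - (X : ℤ[X]) • B.map (fun a => (a : ℤ[X]))).det) := by
  constructor
  · intro n m R S
    have h1 : (X : α[X]) • (R * S).map C =
        ((X : α[X]) • R.map C) * S.map C := by
      rw [Matrix.map_mul, Matrix.smul_mul]
    have h2 : (X : α[X]) • (S * R).map C =
        S.map C * ((X : α[X]) • R.map C) := by
      rw [Matrix.map_mul, Matrix.mul_smul]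
    rw [h1, h2, Matrix.det_one_sub_mul_comm]
  · rintro n m A B ⟨R, S, hA, hB⟩
    subst hA; subst hB
    have hmap : ∀ (k l : ℕ) (M : Matrix (Fin k) (Fin l) ℕ),
        M.map (fun a => (a : ℤ[X])) = M.map (Nat.castRingHom ℤ[X]) := fun _ _ _ => rfl
    rw [hmap, hmap, Matrix.map_mul, Matrix.map_mul,
      show (X : ℤ[X]) • (R.map (Nat.castRingHom ℤ[X]) * S.map (Nat.castRingHom ℤ[X])) =
        ((X : ℤ[X]) • R.map (Nat.castRingHom ℤ[X])) * S.map (Nat.castRingHom ℤ[X]) from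
        (Matrix.smul_mul _ _ _).symm,
      show (X : ℤ[X]) • (S.map (Nat.castRingHom ℤ[X]) * R.map (Nat.castRingHom ℤ[X])) =
        S.map (Nat.castRingHom ℤ[X]) * ((X : ℤ[X]) • R.map (Nat.castRingHom ℤ[X])) from
        (Matrix.mul_smul _ _ _).symm,
      Matrix.det_one_sub_mul_comm]
end

section
/- If R and S are non-negative integer matrices (possibly infinite, indexed by countable sets) such that both RS and SR are regular, then R and S are regular. -/
open scoped ENNReal
open Filter Set Topology

section Aux

lemma ENat.hasSum_aux {ι : Type*} (f : ι → ℕ∞) :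
    HasSum f (⨆ s : Finset ι, ∑ i ∈ s, f i) :=
  hasSum_of_isLUB _ (isLUB_iSup)

lemma ENat.summable_aux {ι : Type*} (f : ι → ℕ∞) : Summable f :=
  ⟨_, ENat.hasSum_aux f⟩

lemma ENat.continuous_toENNReal_aux : Continuous (fun x : ℕ∞ => (x : ℝ≥0∞)) := by
  refine continuous_iff_continuousAt.2 fun x => ?_
  cases x with
  | top =>
    rw [ContinuousAt]
    simp only [ENat.toENNReal_top]
    refine ENNReal.tendsto_nhds_top fun n => ?_
    have hmem : Set.Ioi (n : ℕ∞) ∈ 𝓝 (⊤ : ℕ∞) :=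
      isOpen_Ioi.mem_nhds (by simp [lt_top_iff_ne_top])
    filter_upwards [hmem] with x hx
    have : ((n : ℕ∞) : ℝ≥0∞) < (x : ℝ≥0∞) := ENat.toENNReal_lt.mpr hx
    simpa using this
  | coe n =>
    rw [ContinuousAt, ENat.nhds_eq_pure (by simp)]
    exact tendsto_pure_nhds _ _

noncomputable def ENat.toENNRealHom_aux : ℕ∞ →+ ℝ≥0∞ where
  toFun := fun x => (x : ℝ≥0∞)
  map_zero' := ENat.toENNReal_zero
  map_add' := ENat.toENNReal_add

lemma ENat.toENNReal_tsum_aux {ι : Type*} (f : ι → ℕ∞) :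
    ((∑' i, f i : ℕ∞) : ℝ≥0∞) = ∑' i, (f i : ℝ≥0∞) := by
  have h := (ENat.summable_aux f).hasSum
  have h2 : HasSum (fun i => (f i : ℝ≥0∞)) ((∑' i, f i : ℕ∞) : ℝ≥0∞) :=
    h.map ENat.toENNRealHom_aux ENat.continuous_toENNReal_aux
  exact h2.tsum_eq.symm

lemma ENat.toENNReal_pos_aux {x : ℕ∞} : 0 < x ↔ (0 : ℝ≥0∞) < (x : ℝ≥0∞) := by
  rw [← ENat.toENNReal_zero, ENat.toENNReal_lt]

lemma ENat.toENNReal_lt_top_aux {x : ℕ∞} : x < ⊤ ↔ (x : ℝ≥0∞) < ⊤ := by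
  rw [← ENat.toENNReal_top, ENat.toENNReal_lt]

/-- Core step in `ℝ≥0∞`: if the rows of `RS` are positive and finite, and every
row sum of `S` is at least 1, then the rows of `R` are positive and finite. -/
lemma core_aux {I J : Type*} (R : I → J → ℝ≥0∞) (S : J → I → ℝ≥0∞)
    (hpos : ∀ i, 0 < ∑' i', ∑' j, R i j * S j i')
    (hfin : ∀ i, ∑' i', ∑' j, R i j * S j i' < ⊤)
    (hS1 : ∀ j, (1 : ℝ≥0∞) ≤ ∑' i', S j i') (i : I) :
    0 < ∑' j, R i j ∧ ∑' j, R i j < ⊤ := by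
  constructor
  · rcases eq_or_ne (∑' j, R i j) 0 with h | h
    · exfalso
      have hz : ∀ j, R i j = 0 := fun j => ENNReal.tsum_eq_zero.mp h j
      have := hpos i
      simp [hz] at this
    · exact pos_iff_ne_zero.mpr h
  · calc ∑' j, R i j ≤ ∑' j, R i j * ∑' i', S j i' := by
          refine ENNReal.tsum_le_tsum fun j => ?_
          nth_rewrite 1 [← mul_one (R i j)]
          exact mul_le_mul_right (hS1 j) _
      _ = ∑' j, ∑' i', R i j * S j i' := by simp_rw [ENNReal.tsum_mul_left]
      _ = ∑' i', ∑' j, R i j * S j i' := ENNReal.tsum_comm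
      _ < ⊤ := hfin i

end Aux


/-- A (possibly infinite) `ℕ∞`-valued matrix is regular if every row has finite
and nonzero sum. -/
def RegularMatrix {I J : Type*} (M : I → J → ℕ∞) : Prop :=
  ∀ i : I, (0 : ℕ∞) < ∑' j : J, M i j ∧ ∑' j : J, M i j < ⊤

/-- If R and S are (possibly infinite) non-negative integer matrices indexed by
countable sets such that RS and SR are regular, then R and S are regular. -/
theorem regular_of_mul_regular {I J : Type*} [Countable I] [Countable J]
    (R : I → J → ℕ) (S : J → I → ℕ)
    (hRS : RegularMatrix (fun i i' => ∑' j : J, (R i j : ℕ∞) * (S j i' : ℕ∞)))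
    (hSR : RegularMatrix (fun j j' => ∑' i : I, (S j i : ℕ∞) * (R i j' : ℕ∞))) :
    RegularMatrix (fun i j => (R i j : ℕ∞)) ∧ RegularMatrix (fun j i => (S j i : ℕ∞)) := by
  -- convert hypotheses to ℝ≥0∞
  have hRSpos : ∀ i, 0 < ∑' i', ∑' j, (R i j : ℝ≥0∞) * (S j i' : ℝ≥0∞) := by
    intro i
    have h := (hRS i).1
    rw [ENat.toENNReal_pos_aux, ENat.toENNReal_tsum_aux] at h
    simpa [ENat.toENNReal_tsum_aux, ENat.toENNReal_mul] using h
  have hRSfin : ∀ i, ∑' i', ∑' j, (R i j : ℝ≥0∞) * (S j i' : ℝ≥0∞) < ⊤ := by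
    intro i
    have h := (hRS i).2
    rw [ENat.toENNReal_lt_top_aux, ENat.toENNReal_tsum_aux] at h
    simpa [ENat.toENNReal_tsum_aux, ENat.toENNReal_mul] using h
  have hSRpos : ∀ j, 0 < ∑' j', ∑' i, (S j i : ℝ≥0∞) * (R i j' : ℝ≥0∞) := by
    intro j
    have h := (hSR j).1
    rw [ENat.toENNReal_pos_aux, ENat.toENNReal_tsum_aux] at h
    simpa [ENat.toENNReal_tsum_aux, ENat.toENNReal_mul] using h
  have hSRfin : ∀ j, ∑' j', ∑' i, (S j i : ℝ≥0∞) * (R i j' : ℝ≥0∞) < ⊤ := by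
    intro j
    have h := (hSR j).2
    rw [ENat.toENNReal_lt_top_aux, ENat.toENNReal_tsum_aux] at h
    simpa [ENat.toENNReal_tsum_aux, ENat.toENNReal_mul] using h
  -- every row of S has sum at least 1
  have hS1 : ∀ j, (1 : ℝ≥0∞) ≤ ∑' i, (S j i : ℝ≥0∞) := by
    intro j
    by_contra hlt
    push_neg at hlt
    have hz : ∀ i, (S j i : ℝ≥0∞) = 0 := by
      intro i
      by_contra hne
      have h1 : (1 : ℝ≥0∞) ≤ (S j i : ℝ≥0∞) := by
        have : (1 : ℕ) ≤ S j i := Nat.one_le_iff_ne_zero.mpr (by exact_mod_cast hne)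
        exact_mod_cast this
      exact absurd (h1.trans (ENNReal.le_tsum i)) (not_le.mpr hlt)
    have := hSRpos j
    simp [hz] at this
  -- every row of R has sum at least 1
  have hR1 : ∀ i, (1 : ℝ≥0∞) ≤ ∑' j, (R i j : ℝ≥0∞) := by
    intro i
    by_contra hlt
    push_neg at hlt
    have hz : ∀ j, (R i j : ℝ≥0∞) = 0 := by
      intro j
      by_contra hne
      have h1 : (1 : ℝ≥0∞) ≤ (R i j : ℝ≥0∞) := by
        have : (1 : ℕ) ≤ R i j := Nat.one_le_iff_ne_zero.mpr (by exact_mod_cast hne)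
        exact_mod_cast this
      exact absurd (h1.trans (ENNReal.le_tsum j)) (not_le.mpr hlt)
    have := hRSpos i
    simp [hz] at this
  constructor
  · intro i
    have h := core_aux (fun i j => (R i j : ℝ≥0∞)) (fun j i => (S j i : ℝ≥0∞))
      hRSpos hRSfin hS1 i
    constructor
    · rw [ENat.toENNReal_pos_aux, ENat.toENNReal_tsum_aux]
      simpa using h.1
    · rw [ENat.toENNReal_lt_top_aux, ENat.toENNReal_tsum_aux]
      simpa using h.2
  · intro j
    have h := core_aux (fun j i => (S j i : ℝ≥0∞)) (fun i j => (R i j : ℝ≥0∞))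
      hSRpos hSRfin hR1 j
    constructor
    · rw [ENat.toENNReal_pos_aux, ENat.toENNReal_tsum_aux]
      simpa using h.1
    · rw [ENat.toENNReal_lt_top_aux, ENat.toENNReal_tsum_aux]
      simpa using h.2
end
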